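/- There exists a constant C depending only on n and p such that the following holds: if g is nonnegative, u is a radially decreasing W^{1,p} solution of -Δ_p u = g(u) on the punctured unit ball (in radial coordinates) with u(r) > 0 for r ∈ (0,1) and u(1) = 0, then ∫_0^{1/4} r^{n-1} g(u(r)) dr ≤ C ∫_0^{1/2} s^{n-1} u(s)^{p-1} ds. -/

import Mathlib

open MeasureTheory Set Real Filter

/-- The radial `W^{1,p}` norm of a radial function `u` with radial derivative `u'`
on the unit ball of `ℝ^n`, written in radial coordinates. -/
noncomputable def radialNorm (n : ℕ) (p : ℝ) (u u' : ℝ → ℝ) : ℝ :=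
  (∫ r in Ioc (0:ℝ) 1, r ^ ((n : ℝ) - 1) * (|u r| ^ p + |u' r| ^ p)) ^ (1 / p)

/-- `u : (0,1] → ℝ` (with radial derivative `u'`) is a radially decreasing `W^{1,p}`
solution of `-Δ_p u = g(u)` on the punctured unit ball, in radial coordinates:
`u` is `C^1` on `(0,1]` with derivative `u'`, `u' < 0` on `(0,1)`,
`r ↦ r^{n-1}|u'|^{p-2}u'` has derivative `-r^{n-1} g(u(r))` on `(0,1)`, and the radial
`W^{1,p}` norm of `u` is finite. -/
def IsRadialSolution (n : ℕ) (p : ℝ) (g : ℝ → ℝ) (u u' : ℝ → ℝ) : Prop :=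
  (∀ r ∈ Ioc (0:ℝ) 1, HasDerivWithinAt u (u' r) (Ioc (0:ℝ) 1) r) ∧
  ContinuousOn u' (Ioc (0:ℝ) 1) ∧
  (∀ r ∈ Ioo (0:ℝ) 1, u' r < 0) ∧
  (∀ r ∈ Ioo (0:ℝ) 1,
    HasDerivAt (fun s : ℝ => s ^ ((n : ℝ) - 1) * |u' s| ^ (p - 2) * u' s)
      (-(r ^ ((n : ℝ) - 1) * g (u r))) r) ∧
  IntegrableOn (fun r : ℝ => r ^ ((n : ℝ) - 1) * (|u r| ^ p + |u' r| ^ p)) (Ioc (0:ℝ) 1)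

/-- Semi-stability of a radial solution: the second variation of energy is nonnegative
for every `C^1` test function with compact support in `(0,1)`. -/
def IsSemiStable (n : ℕ) (p : ℝ) (g : ℝ → ℝ) (u u' : ℝ → ℝ) : Prop :=
  ∀ ξ : ℝ → ℝ, ContDiff ℝ 1 ξ → IsCompact (tsupport ξ) → tsupport ξ ⊆ Ioo (0:ℝ) 1 →
    0 ≤ ∫ r in Ioc (0:ℝ) 1,
        r ^ ((n : ℝ) - 1) *
          ((p - 1) * |u' r| ^ (p - 2) * (deriv ξ r) ^ 2 - deriv g (u r) * (ξ r) ^ 2)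

/-!
Write `Φ(r) = r^{n-1} (-u'(r))^{p-1}`. The equation says `Φ' = r^{n-1} g(u) ≥ 0`, so the left-hand
side is at most `Φ(1/4) - Φ(0+) ≤ Φ(1/4)`. Conversely, since `Φ` increases,
`-u' ≥ Φ(1/4)^{1/(p-1)}` on `[1/4, 1)`; as `u(1) = 0` this forces `u ≥ Φ(1/4)^{1/(p-1)} / 2` on
`[1/4, 1/2]`, so the right-hand integral is at least `Φ(1/4) / (4^n 2^{p-1})`.
-/

open Topology

/-- On `(0,1)`, where `u' < 0`, this is `-r^{n-1} |u'|^{p-2} u'`. -/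
noncomputable def radialFlux (n : ℕ) (p : ℝ) (u' : ℝ → ℝ) (r : ℝ) : ℝ :=
  r ^ ((n : ℝ) - 1) * (-u' r) ^ (p - 1)

lemma abs_rpow_sub_two_mul_of_neg {x : ℝ} (hx : x < 0) (p : ℝ) :
    |x| ^ (p - 2) * x = -(-x) ^ (p - 1) := by
  have hx' : 0 < -x := neg_pos.2 hx
  rw [abs_of_neg hx, show p - 1 = (p - 2) + 1 by ring, rpow_add_one hx'.ne']
  ring

lemma integrableOn_Ioc_and_integral_le_of_hasDerivAt {G g : ℝ → ℝ} {a b K : ℝ} (hab : a < b)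
    (hG : ∀ x ∈ Ioc a b, HasDerivAt G (g x) x) (hg : ∀ x ∈ Ioc a b, 0 ≤ g x)
    (hK : ∀ x ∈ Ioc a b, K ≤ G x) :
    IntegrableOn g (Ioc a b) ∧ ∫ x in Ioc a b, g x ≤ G b - K := by
  have hsub : ∀ x ∈ Ioc a b, Icc x b ⊆ Ioc a b := fun x hx y hy => ⟨hx.1.trans_le hy.1, hy.2⟩
  have hcont : ∀ x ∈ Ioc a b, ContinuousOn G (Icc x b) := fun x hx y hy =>
    (hG y (hsub x hx hy)).continuousAt.continuousWithinAt
  have hpiece : ∀ x ∈ Ioc a b,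
      IntegrableOn g (Ioc x b) ∧ ∫ t in Ioc x b, g t ≤ G b - K := by
    intro x hx
    have hderiv : ∀ y ∈ Ioo x b, HasDerivAt G (g y) y := fun y hy =>
      hG y (hsub x hx (Ioo_subset_Icc_self hy))
    have hint := intervalIntegral.integrableOn_deriv_of_nonneg (hcont x hx) hderiv fun y hy =>
      hg y (hsub x hx (Ioo_subset_Icc_self hy))
    refine ⟨hint, ?_⟩
    rw [← intervalIntegral.integral_of_le hx.2, intervalIntegral.integral_eq_sub_of_hasDerivAt_of_le
      hx.2 (hcont x hx) hderiv ((intervalIntegrable_iff_integrableOn_Ioc_of_le hx.2).2 hint)]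
    linarith [hK x hx]
  obtain ⟨v, -, hv, hv_lim⟩ := exists_seq_strictAnti_tendsto' hab
  have hv' : ∀ i, v i ∈ Ioc a b := fun i => Ioo_subset_Ioc_self (hv i)
  have hnorm : ∀ i, ∫ t in Ioc (v i) b, ‖g t‖ = ∫ t in Ioc (v i) b, g t := fun i =>
    setIntegral_congr_fun measurableSet_Ioc fun t ht =>
      norm_of_nonneg (hg t ⟨(hv' i).1.trans ht.1, ht.2⟩)
  have hgi : IntegrableOn g (Ioc a b) :=
    integrableOn_Ioc_of_intervalIntegral_norm_bounded_left (fun i => (hpiece _ (hv' i)).1) hv_lim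
      (Eventually.of_forall fun i => (hnorm i).trans_le (hpiece _ (hv' i)).2)
  have hlim : Tendsto (fun i => ∫ t in Ioc (v i) b, g t) atTop (𝓝 (∫ t in Ioc a b, g t)) := by
    refine ((aecover_Ioc_of_Ioc hv_lim tendsto_const_nhds).integral_tendsto_of_countably_generated
      hgi).congr fun i => ?_
    rw [Measure.restrict_restrict measurableSet_Ioc,
      inter_eq_left.2 (Ioc_subset_Ioc_left (hv' i).1.le)]
  exact ⟨hgi, le_of_tendsto' hlim fun i => (hpiece _ (hv' i)).2⟩

lemma rpow_sub_one_le_one_add_rpow {x p : ℝ} (hx : 0 ≤ x) (hp : 1 ≤ p) :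
    x ^ (p - 1) ≤ 1 + x ^ p := by
  rcases le_total x 1 with h | h
  · linarith [rpow_le_one hx h (sub_nonneg.2 hp), rpow_nonneg hx p]
  · linarith [rpow_le_rpow_of_exponent_le h (sub_le_self p zero_le_one)]

namespace IsRadialSolution

variable {n : ℕ} {p : ℝ} {g u u' : ℝ → ℝ}

lemma hasDerivAt_radialFlux (h : IsRadialSolution n p g u u') {r : ℝ} (hr : r ∈ Ioo (0 : ℝ) 1) :
    HasDerivAt (radialFlux n p u') (r ^ ((n : ℝ) - 1) * g (u r)) r := by
  obtain ⟨-, -, hu'_neg, hflux, -⟩ := h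
  have hflux_eq : radialFlux n p u' =ᶠ[𝓝 r]
      fun s => -(s ^ ((n : ℝ) - 1) * |u' s| ^ (p - 2) * u' s) := by
    filter_upwards [isOpen_Ioo.mem_nhds hr] with s hs
    rw [radialFlux, mul_assoc, abs_rpow_sub_two_mul_of_neg (hu'_neg s hs)]
    ring
  simpa using (hflux r hr).neg.congr_of_eventuallyEq hflux_eq

lemma radialFlux_nonneg (h : IsRadialSolution n p g u u') {r : ℝ} (hr : r ∈ Ioo (0 : ℝ) 1) :
    0 ≤ radialFlux n p u' r :=
  mul_nonneg (rpow_nonneg hr.1.le _) (rpow_nonneg (neg_nonneg.2 (h.2.2.1 r hr).le) _)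

lemma monotoneOn_radialFlux (h : IsRadialSolution n p g u u') (hg : ∀ t, 0 ≤ g t) :
    MonotoneOn (radialFlux n p u') (Ioo 0 1) := by
  refine monotoneOn_of_hasDerivWithinAt_nonneg (f' := fun r => r ^ ((n : ℝ) - 1) * g (u r))
    (convex_Ioo 0 1)
    (fun r hr => (h.hasDerivAt_radialFlux hr).continuousAt.continuousWithinAt) (fun r hr => ?_)
    fun r hr => mul_nonneg (rpow_nonneg (interior_subset hr).1.le _) (hg _)
  rw [interior_Ioo] at hr ⊢
  exact (h.hasDerivAt_radialFlux hr).hasDerivWithinAt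

lemma integrableOn_and_integral_le_radialFlux (h : IsRadialSolution n p g u u')
    (hg : ∀ t, 0 ≤ g t) {c : ℝ} (hc : c ∈ Ioo (0 : ℝ) 1) :
    IntegrableOn (fun r => r ^ ((n : ℝ) - 1) * g (u r)) (Ioc 0 c) ∧
      ∫ r in Ioc 0 c, r ^ ((n : ℝ) - 1) * g (u r) ≤ radialFlux n p u' c := by
  have hsub : Ioc 0 c ⊆ Ioo (0 : ℝ) 1 := Ioc_subset_Ioo_right hc.2
  simpa using integrableOn_Ioc_and_integral_le_of_hasDerivAt hc.1
    (fun r hr => h.hasDerivAt_radialFlux (hsub hr))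
    (fun r hr => mul_nonneg (rpow_nonneg hr.1.le _) (hg _))
    (fun r hr => h.radialFlux_nonneg (hsub hr))

lemma radialFlux_le_rpow_neg_deriv (h : IsRadialSolution n p g u u') (hg : ∀ t, 0 ≤ g t)
    (hn : 1 ≤ n) {c r : ℝ} (hc : 0 < c) (hcr : c ≤ r) (hr : r < 1) :
    radialFlux n p u' c ≤ (-u' r) ^ (p - 1) := by
  have hr' : r ∈ Ioo (0 : ℝ) 1 := ⟨hc.trans_le hcr, hr⟩
  calc radialFlux n p u' c ≤ radialFlux n p u' r :=
        h.monotoneOn_radialFlux hg ⟨hc, hcr.trans_lt hr⟩ hr' hcr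
    _ ≤ (-u' r) ^ (p - 1) := mul_le_of_le_one_left
        (rpow_nonneg (neg_nonneg.2 (h.2.2.1 r hr').le) _)
        (rpow_le_one hr'.1.le hr.le (by simpa using hn))

lemma mul_sub_le_sub_of_le_neg_deriv (h : IsRadialSolution n p g u u') {c m : ℝ} (hc : 0 < c)
    (hm : ∀ r ∈ Ioo c 1, m ≤ -u' r) {s : ℝ} (hs : s ∈ Icc c 1) :
    m * (1 - s) ≤ u s - u 1 := by
  obtain ⟨hu, -⟩ := h
  have hsub : Icc c 1 ⊆ Ioc (0 : ℝ) 1 := fun x hx => ⟨hc.trans_le hx.1, hx.2⟩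
  have hderiv : ∀ x ∈ Ioo c 1, HasDerivAt u (u' x) x := fun x hx =>
    (hu x (hsub (Ioo_subset_Icc_self hx))).hasDerivAt (Ioc_mem_nhds (hc.trans hx.1) hx.2)
  have := (convex_Icc c 1).image_sub_le_mul_sub_of_deriv_le (C := -m)
    (fun x hx => (hu x (hsub hx)).continuousWithinAt.mono hsub)
    (fun x hx => (hderiv x (by rwa [interior_Icc] at hx)).differentiableAt.differentiableWithinAt)
    (fun x hx => by
      rw [interior_Icc] at hx
      rw [(hderiv x hx).deriv]
      linarith [hm x hx])
    s hs 1 ⟨hs.1.trans hs.2, le_rfl⟩ hs.2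
  linarith

lemma radialFlux_rpow_inv_mul_sub_le (h : IsRadialSolution n p g u u') (hg : ∀ t, 0 ≤ g t)
    (hn : 1 ≤ n) (hp : 1 < p) {c s : ℝ} (hc : c ∈ Ioo (0 : ℝ) 1) (hs : s ∈ Icc c 1) :
    radialFlux n p u' c ^ (p - 1)⁻¹ * (1 - s) ≤ u s - u 1 := by
  refine h.mul_sub_le_sub_of_le_neg_deriv hc.1 (fun r hr => ?_) hs
  have hr' : r ∈ Ioo (0 : ℝ) 1 := ⟨hc.1.trans hr.1, hr.2⟩
  exact (rpow_inv_le_iff_of_pos (h.radialFlux_nonneg hc) (neg_nonneg.2 (h.2.2.1 r hr').le)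
    (sub_pos.2 hp)).2 (h.radialFlux_le_rpow_neg_deriv hg hn hc.1 hr.1.le hr.2)

lemma integrableOn_rpow_mul_rpow_sub_one (h : IsRadialSolution n p g u u') (hn : 1 ≤ n)
    (hp : 1 ≤ p) (hu : ∀ r ∈ Ioo (0 : ℝ) 1, 0 < u r) {b : ℝ} (hb : b < 1) :
    IntegrableOn (fun s => s ^ ((n : ℝ) - 1) * u s ^ (p - 1)) (Ioc 0 b) := by
  obtain ⟨hu_deriv, -, -, -, hnorm⟩ := h
  have hn' : (0 : ℝ) ≤ (n : ℝ) - 1 := by simpa using hn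
  have hsub : Ioc 0 b ⊆ Ioc (0 : ℝ) 1 := Ioc_subset_Ioc_right hb.le
  have hweight : IntegrableOn (fun s : ℝ => s ^ ((n : ℝ) - 1)) (Ioc 0 1) :=
    (intervalIntegral.intervalIntegrable_rpow' (by linarith)).1
  have hu_cont : ContinuousOn u (Ioc 0 1) := fun x hx => (hu_deriv x hx).continuousWithinAt
  have hcont : ContinuousOn (fun s => s ^ ((n : ℝ) - 1) * u s ^ (p - 1)) (Ioc 0 b) :=
    (continuousOn_id.rpow_const fun _ _ => Or.inr hn').mul
      ((hu_cont.mono hsub).rpow_const fun _ _ => Or.inr (sub_nonneg.2 hp))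
  refine ((hweight.add hnorm).mono_set hsub).mono' (hcont.aestronglyMeasurable measurableSet_Ioc)
    ((ae_restrict_iff' measurableSet_Ioc).2 (Eventually.of_forall fun s hs => ?_))
  have hus : 0 < u s := hu s ⟨hs.1, hs.2.trans_lt hb⟩
  have hs' : 0 ≤ s ^ ((n : ℝ) - 1) := rpow_nonneg hs.1.le _
  rw [Pi.add_apply, norm_of_nonneg (mul_nonneg hs' (rpow_nonneg hus.le _)), abs_of_pos hus]
  nlinarith [rpow_sub_one_le_one_add_rpow hus.le hp, rpow_nonneg (abs_nonneg (u' s)) p]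

lemma radialFlux_le_mul_integral (h : IsRadialSolution n p g u u') (hg : ∀ t, 0 ≤ g t)
    (hn : 1 ≤ n) (hp : 1 < p) (hu : ∀ r ∈ Ioo (0 : ℝ) 1, 0 < u r) (hu1 : u 1 = 0) :
    radialFlux n p u' (1 / 4) ≤
      4 ^ n * 2 ^ (p - 1) * ∫ s in Ioc 0 (1 / 2), s ^ ((n : ℝ) - 1) * u s ^ (p - 1) := by
  set B := radialFlux n p u' (1 / 4)
  have hB : 0 ≤ B := h.radialFlux_nonneg (by norm_num)
  set m := B ^ (p - 1)⁻¹
  have hm : 0 ≤ m / 2 := div_nonneg (rpow_nonneg hB _) zero_le_two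
  have hu_low : ∀ s ∈ Icc (1 / 4 : ℝ) (1 / 2), m / 2 ≤ u s := fun s hs => by
    have := h.radialFlux_rpow_inv_mul_sub_le hg hn hp (c := 1 / 4) (by norm_num)
      ⟨hs.1, hs.2.trans (by norm_num)⟩
    rw [hu1, sub_zero] at this
    nlinarith [hs.2]
  set K := (1 / 4 : ℝ) ^ ((n : ℝ) - 1) * (m / 2) ^ (p - 1)
  have hK : B = 4 ^ n * 2 ^ (p - 1) * ((1 / 2 - 1 / 4) * K) := by
    have h2 : (2 : ℝ) ^ (p - 1) ≠ 0 := (rpow_pos_of_pos two_pos _).ne'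
    simp only [K, m]
    rw [div_rpow (rpow_nonneg hB _) zero_le_two, rpow_inv_rpow hB (sub_pos.2 hp).ne',
      rpow_sub_one (by norm_num : (1 / 4 : ℝ) ≠ 0), rpow_natCast, div_pow, one_pow]
    field_simp
    ring
  have hmass := h.integrableOn_rpow_mul_rpow_sub_one hn hp.le hu (b := 1 / 2) (by norm_num)
  have hC : (0 : ℝ) ≤ 4 ^ n * 2 ^ (p - 1) := by positivity
  calc B = 4 ^ n * 2 ^ (p - 1) * ∫ _ in Ioc (1 / 4 : ℝ) (1 / 2), K := by
        rw [setIntegral_const, Real.volume_real_Ioc_of_le (by norm_num), smul_eq_mul, hK]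
    _ ≤ 4 ^ n * 2 ^ (p - 1) *
        ∫ s in Ioc (1 / 4 : ℝ) (1 / 2), s ^ ((n : ℝ) - 1) * u s ^ (p - 1) := by
      refine mul_le_mul_of_nonneg_left (setIntegral_mono_on (integrableOn_const
        measure_Ioc_lt_top.ne) (hmass.mono_set (Ioc_subset_Ioc_left (by norm_num)))
        measurableSet_Ioc fun s hs => ?_) hC
      have hn' : (0 : ℝ) ≤ (n : ℝ) - 1 := by simpa using hn
      have hs' : 0 ≤ s ^ ((n : ℝ) - 1) := rpow_nonneg (by linarith [hs.1]) _
      change (1 / 4 : ℝ) ^ ((n : ℝ) - 1) * (m / 2) ^ (p - 1) ≤ _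
      gcongr
      · exact hs.1.le
      · exact hu_low s (Ioc_subset_Icc_self hs)
    _ ≤ 4 ^ n * 2 ^ (p - 1) *
        ∫ s in Ioc 0 (1 / 2), s ^ ((n : ℝ) - 1) * u s ^ (p - 1) := by
      refine mul_le_mul_of_nonneg_left (setIntegral_mono_set hmass ?_
        (Ioc_subset_Ioc_left (by norm_num)).eventuallyLE) hC
      refine (ae_restrict_iff' measurableSet_Ioc).2 (Eventually.of_forall fun s hs => ?_)
      exact mul_nonneg (rpow_nonneg hs.1.le _) (rpow_nonneg (hu s ⟨hs.1, by linarith [hs.2]⟩).le _)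

end IsRadialSolution

theorem stmt17 (n : ℕ) (hn : 1 ≤ n) (p : ℝ) (hp : 1 < p) :
    ∃ C : ℝ, 0 < C ∧ ∀ (g u u' : ℝ → ℝ), ContDiff ℝ 1 g → (∀ t : ℝ, 0 ≤ g t) →
      IsRadialSolution n p g u u' →
      (∀ r ∈ Ioo (0:ℝ) 1, 0 < u r) → u 1 = 0 →
      IntegrableOn (fun r : ℝ => r ^ ((n : ℝ) - 1) * g (u r)) (Ioc (0:ℝ) (1/4)) ∧
      ∫ r in Ioc (0:ℝ) (1/4), r ^ ((n : ℝ) - 1) * g (u r)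
        ≤ C * ∫ s in Ioc (0:ℝ) (1/2), s ^ ((n : ℝ) - 1) * (u s) ^ (p - 1) := by
  refine ⟨4 ^ n * 2 ^ (p - 1), by positivity, fun g u u' _ hg h hu hu1 => ?_⟩
  obtain ⟨hint, hle⟩ := h.integrableOn_and_integral_le_radialFlux hg (c := 1 / 4) (by norm_num)
  exact ⟨hint, hle.trans (h.radialFlux_le_mul_integral hg hn hp hu hu1)⟩
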